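/- For all n ≥ 1 and k ≥ 0, the k-th derivative of x ↦ 1/(x)_n at x = 1 equals (-1)^k k! c_n^{(k)} / n!. -/

import Mathlib

/-!
Partial fractions: `m! / (x)_{m+1} = ∑_j (-1)^j C(m,j) / (x + j)`. Up to the sign `(-1)^m` the
left side is the `m`-th forward difference of `1/x`, since each difference removes one factor
from a reciprocal Pochhammer symbol: `1/(x+1)_r - 1/(x)_r = -r/(x)_{r+1}`. Near `x = 1` the
reciprocal Pochhammer symbol is thus a combination of the `1/(x+j)`, whose `k`-th derivatives are
`(-1)^k k! / (x+j)^{k+1}`, and `(m+1) C(m,j) = C(m+1,j+1) (j+1)` turns the coefficients at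
`x = 1` into those of `c_{m+1}^{(k)}`.
-/

open Finset Nat Topology

/-- Roman harmonic number `c_n^{(k)}` as a real number. -/
noncomputable def romanHarmonic (n k : ℕ) : ℝ :=
  ∑ j ∈ Finset.Icc 1 n, (-1 : ℝ) ^ (j - 1) * (n.choose j) / (j : ℝ) ^ k

section Algebra

variable {K : Type*} [Field K]

theorem inv_prod_add_one_sub_inv_prod {x : K} {r : ℕ}
    (hx : ∀ i ∈ range (r + 1), x + i ≠ 0) :
    (∏ i ∈ range r, (x + 1 + i))⁻¹ - (∏ i ∈ range r, (x + i))⁻¹ =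
      -r * (∏ i ∈ range (r + 1), (x + i))⁻¹ := by
  have hlast : ∏ i ∈ range (r + 1), (x + i) = (∏ i ∈ range r, (x + i)) * (x + r) :=
    prod_range_succ _ _
  have hfirst : ∏ i ∈ range (r + 1), (x + i) = x * ∏ i ∈ range r, (x + 1 + i) := by
    rw [prod_range_succ', mul_comm]; push_cast; simp only [add_zero, add_assoc, add_comm (1 : K)]
  have hP : ∏ i ∈ range (r + 1), (x + i) ≠ 0 := prod_ne_zero_iff.2 hx
  have hQ : ∏ i ∈ range r, (x + 1 + i) ≠ 0 := right_ne_zero_of_mul (hfirst ▸ hP)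
  have hP' : ∏ i ∈ range r, (x + i) ≠ 0 := left_ne_zero_of_mul (hlast ▸ hP)
  have hxr : x + r ≠ 0 := hx r (self_mem_range_succ r)
  rw [hlast] at hfirst ⊢
  field_simp
  linear_combination hfirst

theorem fwdDiff_iter_inv {x : K} {m : ℕ} (hx : ∀ i ∈ range (m + 1), x + i ≠ 0) :
    (fwdDiff 1)^[m] (fun y : K ↦ y⁻¹) x =
      (-1) ^ m * m ! * (∏ i ∈ range (m + 1), (x + i))⁻¹ := by
  induction m generalizing x with
  | zero => simp
  | succ m ih =>
    have hx1 : ∀ i ∈ range (m + 1), x + 1 + i ≠ 0 := fun i hi ↦ by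
      simpa [add_assoc, add_comm (1 : K)] using hx (i + 1) (by simpa using hi)
    rw [Function.iterate_succ_apply', fwdDiff, ih hx1,
      ih fun i hi ↦ hx i (range_subset_range.2 (by omega) hi), ← mul_sub,
      inv_prod_add_one_sub_inv_prod hx, Nat.factorial_succ]
    push_cast
    ring

theorem factorial_mul_inv_prod_add_eq_sum {x : K} {m : ℕ}
    (hx : ∀ i ∈ range (m + 1), x + i ≠ 0) :
    m ! * (∏ i ∈ range (m + 1), (x + i))⁻¹ =
      ∑ j ∈ range (m + 1), (-1) ^ j * m.choose j * (x + j)⁻¹ := by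
  have hsign : ∀ j ∈ range (m + 1), (-1 : K) ^ m * (-1) ^ (m - j) = (-1) ^ j := fun j hj ↦ by
    rw [← pow_mul_pow_sub (-1 : K) (mem_range_succ_iff.1 hj), mul_assoc, ← mul_pow, neg_one_mul,
      neg_neg, one_pow, mul_one]
  calc (m ! : K) * (∏ i ∈ range (m + 1), (x + i))⁻¹
      = (-1) ^ m * ((-1) ^ m * m ! * (∏ i ∈ range (m + 1), (x + i))⁻¹) := by
        rw [← mul_assoc, ← mul_assoc, ← mul_pow, neg_one_mul, neg_neg, one_pow, one_mul]
    _ = ∑ j ∈ range (m + 1), (-1) ^ j * m.choose j * (x + j)⁻¹ := by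
        rw [← fwdDiff_iter_inv hx, fwdDiff_iter_eq_sum_shift, mul_sum]
        refine sum_congr rfl fun j hj ↦ ?_
        simp only [zsmul_eq_mul, nsmul_eq_mul, mul_one]
        push_cast
        rw [← mul_assoc, ← mul_assoc, hsign j hj]

end Algebra

section Analysis

variable {𝕜 : Type*} [NontriviallyNormedField 𝕜]

theorem iteratedDeriv_inv_add_const (k : ℕ) (c x : 𝕜) :
    iteratedDeriv k (fun y ↦ (y + c)⁻¹) x = (-1) ^ k * k ! * (x + c) ^ (-1 - k : ℤ) := by
  rw [iteratedDeriv_comp_add_const k Inv.inv c, iteratedDeriv_eq_iterate]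
  exact iter_deriv_inv k (x + c)

theorem factorial_mul_iteratedDeriv_inv_prod_add {x : 𝕜} {m : ℕ} (k : ℕ)
    (hx : ∀ i ∈ range (m + 1), x + i ≠ 0) :
    m ! * iteratedDeriv k (fun y : 𝕜 ↦ (∏ i ∈ range (m + 1), (y + i))⁻¹) x =
      ∑ j ∈ range (m + 1),
        (-1) ^ j * m.choose j * ((-1) ^ k * k ! * (x + j) ^ (-1 - k : ℤ)) := by
  have hnhds : ∀ᶠ y : 𝕜 in 𝓝 x, ∀ i ∈ range (m + 1), y + i ≠ 0 :=
    (Filter.eventually_all_finset _).2 fun i hi ↦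
      (continuousAt_id.add continuousAt_const).eventually_ne (hx i hi)
  have hpf : (fun y : 𝕜 ↦ (m ! : 𝕜) * (∏ i ∈ range (m + 1), (y + i))⁻¹) =ᶠ[𝓝 x]
      fun y ↦ ∑ j ∈ range (m + 1), (-1) ^ j * m.choose j * (y + j)⁻¹ :=
    hnhds.mono fun y hy ↦ factorial_mul_inv_prod_add_eq_sum hy
  rw [← iteratedDeriv_const_mul_field, hpf.iteratedDeriv_eq, iteratedDeriv_fun_sum]
  · refine sum_congr rfl fun j _ ↦ ?_
    rw [iteratedDeriv_const_mul_field, iteratedDeriv_inv_add_const]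
  · exact fun j hj ↦ contDiffAt_const.mul ((contDiffAt_id.add contDiffAt_const).inv (hx j hj))

end Analysis

theorem romanHarmonic_succ (m k : ℕ) :
    romanHarmonic (m + 1) k =
      ∑ j ∈ range (m + 1), (-1 : ℝ) ^ j * (m + 1).choose (j + 1) / ((j : ℝ) + 1) ^ k := by
  rw [romanHarmonic, ← Ico_add_one_right_eq_Icc, sum_Ico_eq_sum_range]
  simp [add_comm 1]

theorem iteratedDeriv_reciprocal_pochhammer_at_one (n k : ℕ) (hn : 1 ≤ n) :
    iteratedDeriv k (fun y : ℝ => 1 / ∏ i ∈ Finset.range n, (y + (i : ℝ))) 1 =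
      (-1 : ℝ) ^ k * (Nat.factorial k : ℝ) * romanHarmonic n k / (Nat.factorial n : ℝ) := by
  obtain ⟨m, rfl⟩ := Nat.exists_eq_add_of_le' hn
  have hderiv := factorial_mul_iteratedDeriv_inv_prod_add (x := (1 : ℝ)) (m := m) k
    fun i _ ↦ by positivity
  simp only [one_div]
  rw [eq_div_iff (by positivity), factorial_succ, cast_mul, mul_comm, mul_assoc, hderiv,
    romanHarmonic_succ, mul_sum, mul_sum]
  refine sum_congr rfl fun j _ ↦ ?_
  have hchoose : ((m + 1 : ℕ) : ℝ) * m.choose j = (m + 1).choose (j + 1) * ((j : ℝ) + 1) := by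
    exact_mod_cast add_one_mul_choose_eq m j
  rw [show (-1 - k : ℤ) = -(k + 1 : ℕ) by push_cast; ring, zpow_neg, zpow_natCast]
  field_simp
  linear_combination ((j : ℝ) + 1) ^ k * hchoose
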